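/- arXiv:2410.00548 — 5 statements merged into one kernel-verified Lean document; each statement's English description precedes it below -/
import Mathlib

section
/- Let R = A + U* and S = B + V* be hyperlinear subsets of ℕ^m (A, B, U, V finite), let J be the set of coordinates strongly unbounded for R and S, and let U_J = {p ∈ U : supp(p) ⊆ J}, V_J = {q ∈ V : supp(q) ⊆ J}. If the set (A + U* − U_J*) ∩ (B + V* − V_J*) (computed in ℤ^m) is non-empty, then R and S are not separable by a recognizable subset of ℕ^m. -/
/-- `P*`: all finite `ℕ`-linear combinations of elements of `P`. -/
def nstar {m : ℕ} (P : Set (Fin m → ℕ)) : Set (Fin m → ℕ) :=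
  (AddSubmonoid.closure P : Set (Fin m → ℕ))

/-- Support of a vector. -/
def supp {m : ℕ} (v : Fin m → ℕ) : Set (Fin m) := {i | v i ≠ 0}

/-- `U_J = {p ∈ U : supp p ⊆ J}`. -/
def restrictTo {m : ℕ} (U : Set (Fin m → ℕ)) (J : Set (Fin m)) : Set (Fin m → ℕ) :=
  {p ∈ U | supp p ⊆ J}

/-- A coordinate `j` is strongly unbounded for `A + U*` and `B + V*` if there are
`p ∈ U*`, `q ∈ V*` with `j ∈ supp p = supp q`. -/
def StronglyUnbounded {m : ℕ} (U V : Set (Fin m → ℕ)) (j : Fin m) : Prop :=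
  ∃ p ∈ nstar U, ∃ q ∈ nstar V, j ∈ supp p ∧ supp p = supp q

/-- Coercion of a vector of naturals to a vector of integers. -/
def toInt {m : ℕ} (v : Fin m → ℕ) : Fin m → ℤ := fun i => (v i : ℤ)

/-- `U ⊆ ℕ` is ultimately periodic. -/
def UltPeriodic (U : Set ℕ) : Prop :=
  ∃ n0 p : ℕ, 1 ≤ p ∧ ∀ n ≥ n0, (n ∈ U ↔ n + p ∈ U)

/-- A subset of `ℕ^m` is recognizable if it is a finite union of products
of ultimately periodic subsets of `ℕ`. -/
def Recognizable {m : ℕ} (S : Set (Fin m → ℕ)) : Prop :=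
  ∃ (n : ℕ) (U : Fin n → Fin m → Set ℕ),
    (∀ j i, UltPeriodic (U j i)) ∧ S = ⋃ j, {v | ∀ i, v i ∈ U j i}

/-!
Membership in a recognizable set depends on each coordinate only up to the relation "equal, or
both at least `N` and congruent mod `p`", for suitable `N` and `p`. Given a common point
`a + u - w = b + v - w'`, add to `a + u` the vector `(p - 1) w` plus a large multiple of a vector
of `U*` whose support is exactly `J`, and treat `b + v` symmetrically. This gives points of
`A + U*` and `B + V*` that agree outside `J`, where `w` and `w'` vanish, and that on `J` are both
large and congruent mod `p` to the common point; no recognizable set separates them.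
-/

section

variable {m : ℕ}

theorem supp_add (x y : Fin m → ℕ) : supp (x + y) = supp x ∪ supp y := by
  ext i
  show x i + y i ≠ 0 ↔ x i ≠ 0 ∨ y i ≠ 0
  omega

theorem supp_mono {x y : Fin m → ℕ} (h : x ≤ y) : supp x ⊆ supp y :=
  fun i hi => (Nat.pos_of_ne_zero hi).trans_le (h i) |>.ne'

theorem supp_subset_of_mem_nstar {P : Set (Fin m → ℕ)} {J : Set (Fin m)}
    (hP : ∀ u ∈ P, supp u ⊆ J) {x : Fin m → ℕ} (hx : x ∈ nstar P) : supp x ⊆ J := by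
  induction hx using AddSubmonoid.closure_induction with
  | mem u hu => exact hP u hu
  | zero => intro i hi; exact absurd rfl hi
  | add x y _ _ hx hy => exact supp_add x y ▸ Set.union_subset hx hy

theorem supp_subset_of_mem_nstar_restrictTo {U : Set (Fin m → ℕ)} {J : Set (Fin m)}
    {x : Fin m → ℕ} (hx : x ∈ nstar (restrictTo U J)) : supp x ⊆ J :=
  supp_subset_of_mem_nstar (fun _ hu => hu.2) hx

/-- Sum one witness pair per coordinate: supports of sums are unions. -/
theorem exists_supp_eq_setOf_stronglyUnbounded (U V : Set (Fin m → ℕ)) :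
    ∃ P ∈ nstar U, ∃ Q ∈ nstar V,
      supp P = {j | StronglyUnbounded U V j} ∧ supp Q = {j | StronglyUnbounded U V j} := by
  let T : Set ((Fin m → ℕ) × (Fin m → ℕ)) :=
    {pq | pq.1 ∈ nstar U ∧ pq.2 ∈ nstar V ∧ supp pq.1 = supp pq.2}
  have hwit : ∀ j, ∃ pq ∈ T, StronglyUnbounded U V j → j ∈ supp pq.1 := by
    intro j
    by_cases hj : StronglyUnbounded U V j
    · obtain ⟨p, hp, q, hq, hjp, hpq⟩ := hj
      exact ⟨(p, q), ⟨hp, hq, hpq⟩, fun _ => hjp⟩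
    · exact ⟨0, ⟨zero_mem (AddSubmonoid.closure U), zero_mem (AddSubmonoid.closure V), rfl⟩,
        fun h => absurd h hj⟩
  choose pq hpqT hpq using hwit
  have hsum : ∑ j, pq j ∈ T := by
    refine Finset.sum_induction pq (· ∈ T) ?_ ⟨zero_mem _, zero_mem _, rfl⟩
      (fun j _ => hpqT j)
    rintro x y ⟨hx1, hx2, hx⟩ ⟨hy1, hy2, hy⟩
    exact ⟨AddSubmonoid.add_mem _ hx1 hy1,
      AddSubmonoid.add_mem _ hx2 hy2, by simp only [Prod.fst_add, Prod.snd_add,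
        supp_add, hx, hy]⟩
  obtain ⟨hP, hQ, hPQ⟩ := hsum
  have hsupp : supp (∑ j, pq j).1 = {j | StronglyUnbounded U V j} := by
    refine Set.Subset.antisymm (fun k hk => ⟨_, hP, _, hQ, hk, hPQ⟩) fun j hj => ?_
    have hle : pq j ≤ ∑ j, pq j := Finset.single_le_sum (fun _ _ => zero_le) (Finset.mem_univ j)
    exact supp_mono hle.1 (hpq j hj)
  exact ⟨_, hP, _, hQ, hsupp, hPQ ▸ hsupp⟩

theorem mem_iff_add_mul_of_periodic {W : Set ℕ} {n0 p : ℕ} (h : ∀ n ≥ n0, (n ∈ W ↔ n + p ∈ W))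
    {a : ℕ} (ha : n0 ≤ a) (k : ℕ) : a ∈ W ↔ a + k * p ∈ W := by
  induction k with
  | zero => simp
  | succ k ih => rw [ih, h _ (ha.trans (Nat.le_add_right _ _)), add_mul, one_mul, add_assoc]

theorem UltPeriodic.exists_mem_iff_of_modEq {W : Set ℕ} (hW : UltPeriodic W) :
    ∃ n0 p : ℕ, 0 < p ∧ ∀ a b, n0 ≤ a → n0 ≤ b → a ≡ b [MOD p] → (a ∈ W ↔ b ∈ W) := by
  obtain ⟨n0, p, hp, h⟩ := hW
  refine ⟨n0, p, hp, fun a b ha hb hab => ?_⟩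
  wlog hle : a ≤ b generalizing a b
  · exact (this b a hb ha hab.symm (le_of_not_ge hle)).symm
  obtain ⟨k, hk⟩ := (Nat.modEq_iff_dvd' hle).mp hab
  rw [← Nat.add_sub_cancel' hle, hk, mul_comm]
  exact mem_iff_add_mul_of_periodic h ha k

def ThresholdModEq (N p : ℕ) (r s : Fin m → ℕ) : Prop :=
  ∀ i, r i = s i ∨ (N ≤ r i ∧ N ≤ s i ∧ r i ≡ s i [MOD p])

/-- Take `N` the largest threshold and `p` the product of the periods of all factors. -/
theorem Recognizable.exists_mem_iff_of_thresholdModEq {S : Set (Fin m → ℕ)}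
    (hS : Recognizable S) :
    ∃ N p : ℕ, 0 < p ∧ ∀ r s : Fin m → ℕ, ThresholdModEq N p r s → (r ∈ S ↔ s ∈ S) := by
  obtain ⟨n, W, hW, rfl⟩ := hS
  choose n0 p hp hmem using fun j i => (hW j i).exists_mem_iff_of_modEq
  refine ⟨Finset.univ.sup fun ji : Fin n × Fin m => n0 ji.1 ji.2,
    ∏ ji : Fin n × Fin m, p ji.1 ji.2, Finset.prod_pos fun ji _ => hp ji.1 ji.2,
    fun r s hrs => ?_⟩
  simp only [Set.mem_iUnion]
  refine exists_congr fun j => forall_congr' fun i => ?_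
  rcases hrs i with heq | ⟨hr, hs, hmod⟩
  · rw [heq]
  · have hle := Finset.le_sup (f := fun ji : Fin n × Fin m => n0 ji.1 ji.2)
      (Finset.mem_univ (j, i))
    have hdvd := Finset.dvd_prod_of_mem (fun ji : Fin n × Fin m => p ji.1 ji.2)
      (Finset.mem_univ (j, i))
    exact hmem j i _ _ (hle.trans hr) (hle.trans hs) (hmod.of_dvd hdvd)

theorem thresholdModEq_pump {a u w b v w' P Q : Fin m → ℕ} {J : Set (Fin m)}
    (hx : toInt a + toInt u - toInt w = toInt b + toInt v - toInt w')
    (hw : supp w ⊆ J) (hw' : supp w' ⊆ J) (hP : supp P = J) (hQ : supp Q = J) (N k : ℕ) :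
    ThresholdModEq N (k + 1) (a + (u + k • w + (N * (k + 1)) • P))
      (b + (v + k • w' + (N * (k + 1)) • Q)) := by
  intro i
  have hxi : (a i : ℤ) + u i - w i = b i + v i - w' i := by
    simpa [toInt] using congrFun hx i
  simp only [Pi.add_apply, Pi.smul_apply, smul_eq_mul]
  by_cases hi : i ∈ J
  · have hPi : 1 ≤ P i := Nat.one_le_iff_ne_zero.2 (hP ▸ hi : i ∈ supp P)
    have hQi : 1 ≤ Q i := Nat.one_le_iff_ne_zero.2 (hQ ▸ hi : i ∈ supp Q)
    have hNP : N ≤ N * (k + 1) * P i :=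
      mul_assoc N _ _ ▸ Nat.le_mul_of_pos_right N (by positivity)
    have hNQ : N ≤ N * (k + 1) * Q i :=
      mul_assoc N _ _ ▸ Nat.le_mul_of_pos_right N (by positivity)
    refine Or.inr ⟨by omega, by omega, Nat.modEq_iff_dvd.2 ?_⟩
    push_cast
    exact ⟨w' i - w i + N * (Q i - P i), by linear_combination -hxi⟩
  · have hwi : w i = 0 := not_not.1 fun h => hi (hw h)
    have hw'i : w' i = 0 := not_not.1 fun h => hi (hw' h)
    have hPi : P i = 0 := not_not.1 fun h => hi (hP ▸ h)
    have hQi : Q i = 0 := not_not.1 fun h => hi (hQ ▸ h)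
    left
    simp only [hwi, hw'i, hPi, hQi] at hxi ⊢
    omega

end

theorem inseparable_of_intersection_nonempty_general (m : ℕ)
    (A B U V : Set (Fin m → ℕ))
    (J : Set (Fin m)) (hJ : J = {j | StronglyUnbounded U V j})
    (hne : ({x : Fin m → ℤ | ∃ a ∈ A, ∃ u ∈ nstar U, ∃ w ∈ nstar (restrictTo U J),
              x = toInt a + toInt u - toInt w} ∩
            {x : Fin m → ℤ | ∃ b ∈ B, ∃ v ∈ nstar V, ∃ w ∈ nstar (restrictTo V J),
              x = toInt b + toInt v - toInt w}).Nonempty) :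
    ¬ ∃ S : Set (Fin m → ℕ), Recognizable S ∧
        Set.image2 (· + ·) A (nstar U) ⊆ S ∧
        S ∩ Set.image2 (· + ·) B (nstar V) = ∅ := by
  rintro ⟨S, hS, hRS, hdisj⟩
  obtain ⟨_, ⟨a, ha, u, hu, w, hw, rfl⟩, b, hb, v, hv, w', hw', hx⟩ := hne
  obtain ⟨P, hP, Q, hQ, hPJ, hQJ⟩ := exists_supp_eq_setOf_stronglyUnbounded U V
  obtain ⟨N, p, hp, hsat⟩ := hS.exists_mem_iff_of_thresholdModEq
  obtain ⟨k, rfl⟩ : ∃ k, p = k + 1 := ⟨p - 1, by omega⟩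
  have hr : a + (u + k • w + (N * (k + 1)) • P) ∈ Set.image2 (· + ·) A (nstar U) :=
    Set.mem_image2_of_mem ha <| AddSubmonoid.add_mem _
      (add_mem hu (nsmul_mem (AddSubmonoid.closure_mono (fun _ h => h.1) hw) k))
      (nsmul_mem hP _)
  have hs : b + (v + k • w' + (N * (k + 1)) • Q) ∈ Set.image2 (· + ·) B (nstar V) :=
    Set.mem_image2_of_mem hb <| AddSubmonoid.add_mem _
      (add_mem hv (nsmul_mem (AddSubmonoid.closure_mono (fun _ h => h.1) hw') k))
      (nsmul_mem hQ _)
  have hrs := thresholdModEq_pump hx (supp_subset_of_mem_nstar_restrictTo hw)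
    (supp_subset_of_mem_nstar_restrictTo hw') (hPJ.trans hJ.symm) (hQJ.trans hJ.symm) N k
  exact (Set.eq_empty_iff_forall_notMem.1 hdisj) _ ⟨(hsat _ _ hrs).1 (hRS hr), hs⟩

theorem inseparable_of_intersection_nonempty (m : ℕ)
    (A B U V : Set (Fin m → ℕ)) (hA : A.Finite) (hB : B.Finite)
    (hU : U.Finite) (hV : V.Finite)
    (J : Set (Fin m)) (hJ : J = {j | StronglyUnbounded U V j})
    (hne : ({x : Fin m → ℤ | ∃ a ∈ A, ∃ u ∈ nstar U, ∃ w ∈ nstar (restrictTo U J),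
              x = toInt a + toInt u - toInt w} ∩
            {x : Fin m → ℤ | ∃ b ∈ B, ∃ v ∈ nstar V, ∃ w ∈ nstar (restrictTo V J),
              x = toInt b + toInt v - toInt w}).Nonempty) :
    ¬ ∃ S : Set (Fin m → ℕ), Recognizable S ∧
        Set.image2 (· + ·) A (nstar U) ⊆ S ∧
        S ∩ Set.image2 (· + ·) B (nstar V) = ∅ :=
  inseparable_of_intersection_nonempty_general m A B U V J hJ hne
end

section
/- Let R = A + U* and S = B + V* be hyperlinear subsets of ℕ^m and J the set of strongly unbounded coordinates. Then (A + U* − U_J*) ∩ (B + V* − V_J*) is non-empty (in ℤ^m) if and only if (A + U* + V_J*) ∩ (B + V* + U_J*) is non-empty (in ℕ^m). -/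
theorem intersection_int_iff_nat (m : ℕ)
    (A B U V : Set (Fin m → ℕ)) (hA : A.Finite) (hB : B.Finite)
    (hU : U.Finite) (hV : V.Finite)
    (J : Set (Fin m)) (hJ : J = {j | StronglyUnbounded U V j}) :
    ({x : Fin m → ℤ | ∃ a ∈ A, ∃ u ∈ nstar U, ∃ w ∈ nstar (restrictTo U J),
        x = toInt a + toInt u - toInt w} ∩
     {x : Fin m → ℤ | ∃ b ∈ B, ∃ v ∈ nstar V, ∃ w ∈ nstar (restrictTo V J),
        x = toInt b + toInt v - toInt w}).Nonempty ↔
    ({x : Fin m → ℕ | ∃ a ∈ A, ∃ u ∈ nstar U, ∃ w ∈ nstar (restrictTo V J),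
        x = a + u + w} ∩
     {x : Fin m → ℕ | ∃ b ∈ B, ∃ v ∈ nstar V, ∃ w ∈ nstar (restrictTo U J),
        x = b + v + w}).Nonempty := by
  constructor
  · rintro ⟨x, ⟨a, ha, u, hu, w1, hw1, hx1⟩, b, hb, v, hv, w2, hw2, hx2⟩
    refine ⟨a + u + w2, ⟨a, ha, u, hu, w2, hw2, rfl⟩, b, hb, v, hv, w1, hw1, ?_⟩
    funext i
    have h := congrFun (hx1.symm.trans hx2) i
    simp only [Pi.add_apply, Pi.sub_apply, toInt] at h ⊢
    omega
  · rintro ⟨x, ⟨a, ha, u, hu, w2, hw2, hx1⟩, b, hb, v, hv, w1, hw1, hx2⟩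
    refine ⟨toInt x - toInt w1 - toInt w2, ⟨a, ha, u, hu, w1, hw1, ?_⟩,
      b, hb, v, hv, w2, hw2, ?_⟩ <;>
    · funext i
      have h1 := congrFun hx1 i
      have h2 := congrFun hx2 i
      simp only [Pi.add_apply, Pi.sub_apply, toInt] at h1 h2 ⊢
      omega
end

section
/- Let S_1 = {(m, m, 0) : m ∈ ℕ} and S_2 = {(m, 2m, 1) : m ∈ ℕ} as subsets of ℕ³. Then S_1 and S_2 are separable by a recognizable subset of ℕ³ (namely ℕ × ℕ × {0}), but their projections to the first two coordinates, {(m,m) : m ∈ ℕ} and {(m,2m) : m ∈ ℕ}, are not separable by any recognizable subset of ℕ². -/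
lemma ult_iter {U : Set ℕ} {n0 p : ℕ} (h : ∀ n ≥ n0, (n ∈ U ↔ n + p ∈ U)) :
    ∀ k n, n ≥ n0 → (n ∈ U ↔ n + k * p ∈ U) := by
  intro k
  induction k with
  | zero => simp
  | succ k ih =>
    intro n hn
    have h1 := h (n + k * p) (le_trans hn (Nat.le_add_right _ _))
    rw [ih n hn, h1, Nat.succ_mul, Nat.add_assoc]

theorem no_small_model_example :
    (∃ S : Set (Fin 3 → ℕ), S = {v | v 2 = 0} ∧ Recognizable S ∧
      {v : Fin 3 → ℕ | ∃ m : ℕ, v = ![m, m, 0]} ⊆ S ∧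
      S ∩ {v : Fin 3 → ℕ | ∃ m : ℕ, v = ![m, 2 * m, 1]} = ∅) ∧
    ¬ ∃ S : Set (Fin 2 → ℕ), Recognizable S ∧
      {v : Fin 2 → ℕ | ∃ m : ℕ, v = ![m, m]} ⊆ S ∧
      S ∩ {v : Fin 2 → ℕ | ∃ m : ℕ, v = ![m, 2 * m]} = ∅ := by
  constructor
  · refine ⟨{v | v 2 = 0}, rfl, ?_, ?_, ?_⟩
    · refine ⟨1, fun _ i => if i = 2 then {0} else Set.univ, ?_, ?_⟩
      · intro j i
        refine ⟨1, 1, le_refl _, ?_⟩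
        intro n hn
        by_cases h : i = (2 : Fin 3) <;> simp [h] <;> omega
      · ext v
        simp only [Set.mem_iUnion, Set.mem_setOf_eq]
        constructor
        · intro hv
          exact ⟨0, fun i => by by_cases h : i = (2 : Fin 3) <;> simp [h, hv]⟩
        · rintro ⟨j, hj⟩
          have := hj 2
          simpa using this
    · rintro v ⟨m, rfl⟩
      simp [Set.mem_setOf_eq]
    · ext v
      simp only [Set.mem_inter_iff, Set.mem_setOf_eq, Set.mem_empty_iff_false, iff_false]
      rintro ⟨h0, m, rfl⟩
      simp at h0
  · rintro ⟨S, ⟨n, U, hUP, hS⟩, hsub, hdis⟩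
    choose n0 p hp hper using hUP
    set N : ℕ := Finset.univ.sup (fun j : Fin n => Finset.univ.sup (fun i : Fin 2 => n0 j i)) with hN
    set P : ℕ := ∏ j : Fin n, ∏ i : Fin 2, p j i with hPdef
    have hP : 1 ≤ P := Finset.one_le_prod' fun j _ => Finset.one_le_prod' fun i _ => hp j i
    have hdvd : ∀ j i, p j i ∣ P := fun j i =>
      dvd_trans (Finset.dvd_prod_of_mem _ (Finset.mem_univ i))
        (Finset.dvd_prod_of_mem _ (Finset.mem_univ j))
    set m : ℕ := P * (N + 1) with hm
    have hmN : ∀ j i, n0 j i ≤ m := by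
      intro j i
      have h1 : n0 j i ≤ N :=
        le_trans (Finset.le_sup (f := fun i => n0 j i) (Finset.mem_univ i))
          (Finset.le_sup (f := fun j => Finset.univ.sup fun i => n0 j i) (Finset.mem_univ j))
      calc n0 j i ≤ N + 1 := by omega
        _ ≤ P * (N + 1) := Nat.le_mul_of_pos_left _ hP
    have hmem : ![m, m] ∈ S := hsub ⟨m, rfl⟩
    rw [hS] at hmem
    obtain ⟨j, hj⟩ := Set.mem_iUnion.mp hmem
    have hj0 : m ∈ U j 0 := by simpa using hj 0
    have hj1 : m ∈ U j 1 := by simpa using hj 1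
    have key : ∀ (i : Fin 2) (k : ℕ), m ∈ U j i → m + k * m ∈ U j i := by
      intro i k hi
      obtain ⟨c, hc⟩ : p j i ∣ m := dvd_trans (hdvd j i) ⟨N + 1, rfl⟩
      have := (ult_iter (hper j i) (k * c) m (hmN j i)).mp hi
      have heq : m + k * c * p j i = m + k * m := by rw [hc]; ring
      rwa [heq] at this
    have h2 : 2 * m ∈ U j 0 := by
      have := key 0 1 hj0
      have heq : m + 1 * m = 2 * m := by ring
      rwa [heq] at this
    have h4 : 2 * (2 * m) ∈ U j 1 := by
      have := key 1 3 hj1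
      have heq : m + 3 * m = 2 * (2 * m) := by ring
      rwa [heq] at this
    have hv : ![2 * m, 2 * (2 * m)] ∈ S := by
      rw [hS]
      refine Set.mem_iUnion.mpr ⟨j, ?_⟩
      intro i
      fin_cases i <;> simpa using (by assumption : _)
    have : ![2 * m, 2 * (2 * m)] ∈ S ∩ {v : Fin 2 → ℕ | ∃ m : ℕ, v = ![m, 2 * m]} :=
      ⟨hv, 2 * m, rfl⟩
    rw [hdis] at this
    exact this
end

section
/- The solution set {x ∈ ℕ^r : A x = b} of a system of linear Diophantine equations (A ∈ ℤ^{s×r}, b ∈ ℤ^s) is hyperlinear: it equals A_0 + U*, where A_0 is the (finite) set of minimal solutions of A x = b and U is the (finite) set of minimal non-zero solutions of A x = 0. -/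
/-!
Every solution `x` lies above a minimal solution `a`; as `ℕ^r` is canonically ordered,
`x = a + c`, and cancellation in `ℤ^s` makes `c` a homogeneous solution. Peeling off a minimal
nonzero homogeneous solution below `c` leaves a smaller homogeneous solution, so well-founded
induction writes `c` as a sum of minimal ones. Both sets of minimal elements are antichains, hence
finite by Dickson's lemma (`ℕ^r` is well-quasi-ordered).
-/

open Set AddSubmonoid

theorem finite_setOf_minimal {α : Type*} [PartialOrder α] [WellQuasiOrderedLE α] (P : α → Prop) :
    {x | Minimal P x}.Finite :=
  (setOfPred_minimal_antichain P).finite_of_partiallyWellOrderedOn (isPWO_of_wellQuasiOrderedLE _)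

theorem AddMonoidHom.map_eq_zero_of_map_add_eq {M G : Type*} [AddZeroClass M] [AddMonoid G]
    [IsLeftCancelAdd G] (f : M →+ G) {a c : M} (h : f (a + c) = f a) : f c = 0 := by
  rwa [map_add, add_eq_left] at h

section CanonicallyOrdered

variable {M G : Type*} [AddCommMonoid M] [PartialOrder M] [CanonicallyOrderedAdd M]
  [IsCancelAdd M] [WellFoundedLT M] [AddMonoid G] [IsLeftCancelAdd G]

theorem mem_closure_minimal_of_map_eq_zero (f : M →+ G) {x : M} (hx : f x = 0) :
    x ∈ closure {u | Minimal (fun y => f y = 0 ∧ y ≠ 0) u} := by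
  induction x using WellFoundedLT.induction with | _ x ih
  obtain rfl | hx0 := eq_or_ne x 0
  · exact zero_mem _
  obtain ⟨u, hux, hu⟩ := exists_minimal_le_of_wellFoundedLT (fun y => f y = 0 ∧ y ≠ 0) x ⟨hx, hx0⟩
  obtain ⟨c, rfl⟩ := exists_add_of_le hux
  have hc : f c = 0 := f.map_eq_zero_of_map_add_eq (by rw [hx, hu.1.1])
  have hcx : c < u + c := lt_add_of_pos_left c (pos_of_ne_zero hu.1.2)
  exact add_mem (subset_closure hu) (ih c hcx hc)

theorem setOf_map_eq_eq_image2_minimal_add_closure (f : M →+ G) (b : G) :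
    {x | f x = b} = image2 (· + ·) {a | Minimal (f · = b) a}
      (closure {u | Minimal (fun y => f y = 0 ∧ y ≠ 0) u}) := by
  ext x
  constructor
  · intro hx
    obtain ⟨a, hax, ha⟩ := exists_minimal_le_of_wellFoundedLT (f · = b) x hx
    obtain ⟨c, rfl⟩ := exists_add_of_le hax
    have hc : f c = 0 := f.map_eq_zero_of_map_add_eq (by rw [ha.1, ← hx])
    exact ⟨a, ha, c, mem_closure_minimal_of_map_eq_zero f hc, rfl⟩
  · rintro ⟨a, ha, c, hc, rfl⟩
    have hker : closure {u | Minimal (fun y => f y = 0 ∧ y ≠ 0) u} ≤ AddMonoidHom.mker f :=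
      closure_le.2 fun u hu => hu.1.1
    rw [mem_ofPred_eq, map_add, ha.1, hker hc, add_zero]

end CanonicallyOrdered

theorem diophantine_solution_set_hyperlinear (s r : ℕ)
    (A : Matrix (Fin s) (Fin r) ℤ) (b : Fin s → ℤ)
    (Sol : Set (Fin r → ℕ)) (hSol : Sol = {x | A.mulVec (fun i => (x i : ℤ)) = b})
    (Hom : Set (Fin r → ℕ)) (hHom : Hom = {x | A.mulVec (fun i => (x i : ℤ)) = 0})
    (A0 : Set (Fin r → ℕ)) (hA0 : A0 = {x ∈ Sol | ∀ y ∈ Sol, y ≤ x → y = x})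
    (U : Set (Fin r → ℕ))
    (hU : U = {x ∈ Hom | x ≠ 0 ∧ ∀ y ∈ Hom, y ≠ 0 → y ≤ x → y = x}) :
    A0.Finite ∧ U.Finite ∧ Sol = Set.image2 (· + ·) A0 (nstar U) := by
  let f : (Fin r → ℕ) →+ (Fin s → ℤ) :=
    A.mulVecLin.toAddMonoidHom.comp ((Nat.castAddMonoidHom ℤ).compLeft (Fin r))
  have hSol' : Sol = {x | f x = b} := hSol
  have hHom' : Hom = {x | f x = 0} := hHom
  have hA0' : A0 = {a | Minimal (f · = b) a} := by
    ext a
    simp only [hA0, hSol', minimal_iff, mem_ofPred_eq, eq_comm (a := a)]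
  have hU' : U = {u | Minimal (fun y => f y = 0 ∧ y ≠ 0) u} := by
    ext u
    simp only [hU, hHom', minimal_iff, mem_ofPred_eq, and_imp, and_assoc, eq_comm (a := u)]
  refine ⟨hA0' ▸ finite_setOf_minimal _, hU' ▸ finite_setOf_minimal _, ?_⟩
  rw [hSol', hA0', hU']
  exact setOf_map_eq_eq_image2_minimal_add_closure f b
end

section
/- Let R = A + U* and S = B + V* be hyperlinear subsets of ℕ^m and suppose there exist sequences u_1, u_2, … ∈ R and v_1, v_2, … ∈ S with u_{k+1} ∈ u_k + U*, v_{k+1} ∈ v_k + V*, and u_k ∼_k v_k for all k ≥ 1. Then the set J of coordinates on which the sequence (u_k) is unbounded equals the set of coordinates on which (v_k) is unbounded, and every coordinate in J is strongly unbounded for R and S. -/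
lemma diff_aux {m : ℕ} {U : Set (Fin m → ℕ)} {u : ℕ → Fin m → ℕ}
    (hustep : ∀ k ≥ 1, ∃ w ∈ nstar U, u (k + 1) = u k + w) :
    ∀ k l, 1 ≤ k → k ≤ l → ∃ w ∈ nstar U, u l = u k + w := by
  intro k l hk hkl
  induction l with
  | zero => omega
  | succ n ih =>
    rcases Nat.lt_or_ge k (n + 1) with h | h
    · obtain ⟨w, hw, he⟩ := ih (by omega)
      obtain ⟨w', hw', he'⟩ := hustep n (by omega)
      exact ⟨w + w', add_mem hw hw', by rw [he', he, add_assoc]⟩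
    · have hkn : k = n + 1 := by omega
      subst hkn
      exact ⟨0, zero_mem _, (add_zero _).symm⟩

lemma exists_supp_eq {m : ℕ} {U : Set (Fin m → ℕ)} {u : ℕ → Fin m → ℕ}
    (hdiff : ∀ k l, 1 ≤ k → k ≤ l → ∃ w ∈ nstar U, u l = u k + w) :
    ∃ p ∈ nstar U, supp p = {i | ∀ N : ℕ, ∃ k ≥ 1, u k i > N} := by
  have hmono : ∀ k l (i : Fin m), 1 ≤ k → k ≤ l → u k i ≤ u l i := by
    intro k l i hk hkl
    obtain ⟨w, -, he⟩ := hdiff k l hk hkl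
    rw [he]; exact Nat.le_add_right _ _
  -- stabilization points
  have hstab : ∀ i : Fin m, ∃ ki ≥ 1,
      (¬ (∀ N : ℕ, ∃ k ≥ 1, u k i > N)) → ∀ l ≥ ki, u l i = u ki i := by
    intro i
    by_cases hJ : ∀ N : ℕ, ∃ k ≥ 1, u k i > N
    · exact ⟨1, le_refl 1, fun h => absurd hJ h⟩
    · push_neg at hJ
      obtain ⟨N, hN⟩ := hJ
      set S : Set ℕ := Set.range (fun k => u (k + 1) i) with hS
      have hne : S.Nonempty := ⟨u 1 i, ⟨0, rfl⟩⟩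
      have hbdd : BddAbove S := by
        refine ⟨N, ?_⟩
        rintro x ⟨k, rfl⟩
        exact Nat.lt_succ_iff.mp (Nat.lt_succ_of_le (hN (k + 1) (by omega)))
      obtain ⟨k0, hk0⟩ := Nat.sSup_mem hne hbdd
      refine ⟨k0 + 1, by omega, fun _ l hl => ?_⟩
      have h1 : u l i ≤ sSup S := by
        refine le_csSup hbdd ?_
        exact ⟨l - 1, by simp only; congr 1; omega⟩
      have h2 : u (k0 + 1) i ≤ u l i := hmono _ _ i (by omega) hl
      have h3 : u (k0 + 1) i = sSup S := hk0
      omega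
  choose ki hki1 hki2 using hstab
  set K := (Finset.univ.sup ki) + 1 with hK
  have hK1 : 1 ≤ K := by omega
  have hKi : ∀ i, ki i ≤ K := fun i =>
    le_trans (Finset.le_sup (Finset.mem_univ i)) (by omega)
  have hstabK : ∀ i : Fin m, (¬ (∀ N : ℕ, ∃ k ≥ 1, u k i > N)) →
      ∀ l ≥ K, u l i = u K i := by
    intro i hi l hl
    rw [hki2 i hi l (le_trans (hKi i) hl), hki2 i hi K (hKi i)]
  -- big point
  have hbig : ∀ i : Fin m, ∃ li ≥ K,
      (∀ N : ℕ, ∃ k ≥ 1, u k i > N) → u li i > u K i := by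
    intro i
    by_cases hJ : ∀ N : ℕ, ∃ k ≥ 1, u k i > N
    · obtain ⟨k, hk1, hk⟩ := hJ (u K i)
      refine ⟨max k K, le_max_right _ _, fun _ => ?_⟩
      exact lt_of_lt_of_le hk (hmono k _ i hk1 (le_max_left _ _))
    · exact ⟨K, le_refl K, fun h => absurd h hJ⟩
  choose li hli1 hli2 using hbig
  set L := (Finset.univ.sup li) ⊔ K with hL
  have hKL : K ≤ L := le_max_right _ _
  have hLi : ∀ i, li i ≤ L :=
    fun i => le_trans (Finset.le_sup (Finset.mem_univ i)) (le_max_left _ _)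
  obtain ⟨w, hw, he⟩ := hdiff K L hK1 hKL
  refine ⟨w, hw, ?_⟩
  ext i
  have hei : u L i = u K i + w i := by rw [he]; rfl
  simp only [supp, Set.mem_setOf_eq]
  constructor
  · intro hwi
    by_contra hJ
    have := hstabK i hJ L hKL
    omega
  · intro hJ
    have h1 : u (li i) i ≤ u L i := hmono _ _ i (le_trans hK1 (hli1 i)) (hLi i)
    have h2 := hli2 i hJ
    omega

def simk (d k : ℕ) (u v : Fin d → ℕ) : Prop :=
  ∀ i : Fin d, (u i = v i ∧ u i ≤ k) ∨ (u i > k ∧ v i > k ∧ u i % k = v i % k)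

theorem unbounded_coords_strongly_unbounded (m : ℕ)
    (A B U V : Set (Fin m → ℕ)) (hA : A.Finite) (hB : B.Finite)
    (hU : U.Finite) (hV : V.Finite)
    (u v : ℕ → (Fin m → ℕ))
    (hu : ∀ k ≥ 1, u k ∈ Set.image2 (· + ·) A (nstar U))
    (hv : ∀ k ≥ 1, v k ∈ Set.image2 (· + ·) B (nstar V))
    (hustep : ∀ k ≥ 1, ∃ w ∈ nstar U, u (k + 1) = u k + w)
    (hvstep : ∀ k ≥ 1, ∃ w ∈ nstar V, v (k + 1) = v k + w)
    (hsim : ∀ k ≥ 1, simk m k (u k) (v k)) :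
    {i : Fin m | ∀ N : ℕ, ∃ k ≥ 1, u k i > N} =
      {i : Fin m | ∀ N : ℕ, ∃ k ≥ 1, v k i > N} ∧
    ∀ j ∈ {i : Fin m | ∀ N : ℕ, ∃ k ≥ 1, u k i > N}, StronglyUnbounded U V j := by

  have hudiff := diff_aux hustep
  have hvdiff := diff_aux hvstep
  have humono : ∀ k l (i : Fin m), 1 ≤ k → k ≤ l → u k i ≤ u l i := by
    intro k l i hk hkl
    obtain ⟨w, -, he⟩ := hudiff k l hk hkl
    rw [he]; exact Nat.le_add_right _ _
  have hvmono : ∀ k l (i : Fin m), 1 ≤ k → k ≤ l → v k i ≤ v l i := by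
    intro k l i hk hkl
    obtain ⟨w, -, he⟩ := hvdiff k l hk hkl
    rw [he]; exact Nat.le_add_right _ _
  have hJ : {i : Fin m | ∀ N : ℕ, ∃ k ≥ 1, u k i > N} =
      {i : Fin m | ∀ N : ℕ, ∃ k ≥ 1, v k i > N} := by
    ext i
    simp only [Set.mem_setOf_eq]
    constructor
    · intro h N
      obtain ⟨k, hk1, hk⟩ := h N
      have hk1' : 1 ≤ max k N := le_trans hk1 (le_max_left _ _)
      refine ⟨max k N, hk1', ?_⟩
      have h1 : u (max k N) i > N :=
        lt_of_lt_of_le hk (humono k _ i hk1 (le_max_left _ _))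
      have hN : N ≤ max k N := le_max_right _ _
      rcases hsim (max k N) hk1' i with ⟨heq, -⟩ | ⟨-, hv2, -⟩ <;> omega
    · intro h N
      obtain ⟨k, hk1, hk⟩ := h N
      have hk1' : 1 ≤ max k N := le_trans hk1 (le_max_left _ _)
      refine ⟨max k N, hk1', ?_⟩
      have h1 : v (max k N) i > N :=
        lt_of_lt_of_le hk (hvmono k _ i hk1 (le_max_left _ _))
      have hN : N ≤ max k N := le_max_right _ _
      rcases hsim (max k N) hk1' i with ⟨heq, -⟩ | ⟨hu2, -, -⟩ <;> omega
  refine ⟨hJ, ?_⟩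
  intro j hj
  obtain ⟨p, hp, hps⟩ := exists_supp_eq hudiff
  obtain ⟨q, hq, hqs⟩ := exists_supp_eq hvdiff
  refine ⟨p, hp, q, hq, ?_, ?_⟩
  · rw [hps]; exact hj
  · rw [hps, hqs, hJ]
end
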